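/- For every k ≥ 1 and every m ∈ ℕ, the ℝ-vector space H_m(ℍ_k) of weighted homogeneous Δ_{H_k}-harmonic polynomials of degree m is finite-dimensional, and its dimension equals the binomial coefficient C(m + 2k − 1, 2k − 1). -/

import Mathlib

/-!
The Fischer pairing `⟨p, q⟩ = ∑_α α! p_α q_α` on `ℝ[x, y, t]` is positive definite and makes `∂ᵢ`
and multiplication by the `i`-th variable mutually adjoint. Hence `Δ_{H_k}` has the adjoint
`Δ* = ∑_j (X_j*² + Y_j*²)` with `X_j* = x_j + 2t∂_{y_j}` and `Y_j* = y_j − 2t∂_{x_j}`, which raises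
the weighted degree by 2. `Δ*` is injective: it commutes with multiplication by `t`, and setting
`t = 0` turns it into multiplication by `∑_j (x_j² + y_j²)`, so a kernel element is divisible by
arbitrarily high powers of `t`. If `Δ_{H_k} Δ* q = 0` then `⟨Δ* q, Δ* q⟩ = ⟨Δ_{H_k} Δ* q, q⟩ = 0`,
so `Δ_{H_k} ∘ Δ*` is injective on `P_{m-2}` and `Δ_{H_k} : P_m → P_{m-2}` is onto. Therefore
`dim H_m = dim P_m − dim P_{m-2}`, which counts the monomials of weight `m` not divisible by `t`,
i.e. the monomials of degree `m` in the `2k` variables `x, y`.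
-/

open MvPolynomial

noncomputable section

/-- The polynomial ring ℝ[x₁,…,x_k,y₁,…,y_k,t]: variable `j` is `x_{j+1}` for `j < k`,
variable `k + j` is `y_{j+1}` for `j < k`, and variable `2k` is `t`. -/
abbrev Rk (k : ℕ) := MvPolynomial (Fin (2 * k + 1)) ℝ

/-- Index of the variable x_j. -/
def xI (k : ℕ) (j : Fin k) : Fin (2 * k + 1) := ⟨(j : ℕ), by have := j.isLt; omega⟩

/-- Index of the variable y_j. -/
def yI (k : ℕ) (j : Fin k) : Fin (2 * k + 1) := ⟨k + (j : ℕ), by have := j.isLt; omega⟩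

/-- Index of the variable t. -/
def tI (k : ℕ) : Fin (2 * k + 1) := ⟨2 * k, by omega⟩

/-- Weights: 1 on each x_j, y_j and 2 on t. -/
def wk (k : ℕ) : Fin (2 * k + 1) → ℤ := fun i => if (i : ℕ) = 2 * k then 2 else 1

/-- The horizontal vector field X_j p = ∂_{x_j} p + 2 y_j ∂ₜ p. -/
def XopK (k : ℕ) (j : Fin k) : Rk k →ₗ[ℝ] Rk k :=
  (pderiv (xI k j)).toLinearMap +
    (LinearMap.mulLeft ℝ ((2 : Rk k) * X (yI k j))) ∘ₗ (pderiv (tI k)).toLinearMap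

/-- The horizontal vector field Y_j p = ∂_{y_j} p − 2 x_j ∂ₜ p. -/
def YopK (k : ℕ) (j : Fin k) : Rk k →ₗ[ℝ] Rk k :=
  (pderiv (yI k j)).toLinearMap -
    (LinearMap.mulLeft ℝ ((2 : Rk k) * X (xI k j))) ∘ₗ (pderiv (tI k)).toLinearMap

/-- The sub-Laplacian Δ_{H_k} = Σ_j (X_j² + Y_j²). -/
def ΔHk (k : ℕ) : Rk k →ₗ[ℝ] Rk k :=
  ∑ j : Fin k, (XopK k j ∘ₗ XopK k j + YopK k j ∘ₗ YopK k j)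

/-- P_m(ℍ_k): weighted homogeneous polynomials of degree m (ℤ-indexed, so zero for m < 0). -/
def PmK (k : ℕ) (m : ℤ) : Submodule ℝ (Rk k) := weightedHomogeneousSubmodule ℝ (wk k) m

/-- H_m(ℍ_k): weighted homogeneous Δ_{H_k}-harmonic polynomials of degree m. -/
def HmK (k : ℕ) (m : ℤ) : Submodule ℝ (Rk k) := PmK k m ⊓ LinearMap.ker (ΔHk k)


namespace Finsupp

variable {σ : Type*} {w : σ → ℤ}

lemma degree_le_weight (hw : ∀ i, 1 ≤ w i) (d : σ →₀ ℕ) : (d.degree : ℤ) ≤ weight w d := by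
  rw [degree_apply, weight_apply, Finsupp.sum, Nat.cast_sum]
  exact Finset.sum_le_sum fun i _ => by
    rw [nsmul_eq_mul]; exact le_mul_of_one_le_right (Nat.cast_nonneg _) (hw i)

lemma finite_setOf_weight_eq [Finite σ] (hw : ∀ i, 1 ≤ w i) (m : ℤ) :
    {d : σ →₀ ℕ | weight w d = m}.Finite :=
  (finite_of_degree_le m.toNat).subset fun d hd => by
    have := degree_le_weight hw d
    simp only [Set.mem_ofPred_eq] at hd ⊢
    omega

lemma ncard_setOf_weight_eq (i : σ) {m : ℤ} (hfin : {d : σ →₀ ℕ | weight w d = m}.Finite) :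
    {d : σ →₀ ℕ | weight w d = m}.ncard =
      {d : σ →₀ ℕ | weight w d = m - w i}.ncard +
        {d : σ →₀ ℕ | weight w d = m ∧ d i = 0}.ncard := by
  have himage : {d : σ →₀ ℕ | weight w d = m} \ {d | d i = 0} =
      (· + single i 1) '' {d | weight w d = m - w i} := by
    ext d
    constructor
    · rintro ⟨hd : weight w d = m, hdi⟩
      refine ⟨d - single i 1, ?_, sub_add_single_one_cancel hdi⟩
      have := weight_sub_single_add (w := w) hdi
      simp only [Set.mem_ofPred_eq]
      omega
    · rintro ⟨d, hd : weight w d = m - w i, rfl⟩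
      simp only [Set.mem_sdiff, Set.mem_ofPred_eq, map_add, weight_single, one_smul, hd, add_apply,
        single_eq_same]
      omega
  rw [← Set.ncard_inter_add_ncard_sdiff_eq_ncard _ {d | d i = 0} hfin, himage,
    Set.ncard_image_of_injective _ (add_left_injective _), add_comm]
  rfl

end Finsupp

lemma LinearMap.isAdjointPair_sum {R M ι : Type*} [CommSemiring R] [AddCommMonoid M] [Module R M]
    {B : LinearMap.BilinForm R M} (s : Finset ι) {f g : ι → Module.End R M}
    (h : ∀ i ∈ s, B.IsAdjointPair B (f i) (g i)) :
    B.IsAdjointPair B ⇑(∑ i ∈ s, f i) ⇑(∑ i ∈ s, g i) := fun x y => by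
  simp only [LinearMap.sum_apply, map_sum]
  exact Finset.sum_congr rfl fun i hi => h i hi x y

namespace MvPolynomial

variable {σ : Type*}

section Fischer

lemma sum_support_eq_of_subset {R : Type*} [CommSemiring R] {p : MvPolynomial σ R}
    {s : Finset (σ →₀ ℕ)} (hs : p.support ⊆ s) (f : (σ →₀ ℕ) → R) :
    ∑ d ∈ p.support, coeff d p * f d = ∑ d ∈ s, coeff d p * f d :=
  Finset.sum_subset hs fun d _ hd => by rw [notMem_support_iff.mp hd, zero_mul]

variable [Fintype σ]

def fischerWeight (d : σ →₀ ℕ) : ℝ := ∏ i, ((d i).factorial : ℝ)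

lemma fischerWeight_pos (d : σ →₀ ℕ) : 0 < fischerWeight d :=
  Finset.prod_pos fun i _ => by positivity

lemma fischerWeight_add_single (d : σ →₀ ℕ) (i : σ) :
    fischerWeight (d + Finsupp.single i 1) = (d i + 1) * fischerWeight d := by
  classical
  have h : ∀ j, (((d + Finsupp.single i 1 : σ →₀ ℕ) j).factorial : ℝ) =
      (d j).factorial * if j = i then (d i + 1 : ℝ) else 1 := by
    intro j
    by_cases hj : j = i
    · subst hj; simp [Nat.factorial_succ]; ring
    · simp [hj]
  simp only [fischerWeight, h, Finset.prod_mul_distrib, Finset.prod_ite_eq', Finset.mem_univ,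
    if_true]
  ring

def fischer : LinearMap.BilinForm ℝ (MvPolynomial σ ℝ) :=
  LinearMap.mk₂ ℝ (fun p q => ∑ d ∈ p.support, coeff d p * (coeff d q * fischerWeight d))
    (fun p p' q => by
      classical
      rw [sum_support_eq_of_subset support_add,
        sum_support_eq_of_subset (Finset.subset_union_left (s₂ := p'.support)),
        sum_support_eq_of_subset (Finset.subset_union_right (s₁ := p.support))]
      simp only [coeff_add, add_mul, Finset.sum_add_distrib])
    (fun c p q => by
      rw [sum_support_eq_of_subset support_smul, Finset.smul_sum]
      simp only [coeff_smul, smul_eq_mul, mul_assoc])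
    (fun p q q' => by simp only [coeff_add, add_mul, mul_add, Finset.sum_add_distrib])
    (fun c p q => by
      simp only [coeff_smul, smul_eq_mul, Finset.mul_sum]
      exact Finset.sum_congr rfl fun d _ => by ring)

lemma fischer_apply (p q : MvPolynomial σ ℝ) :
    fischer p q = ∑ d ∈ p.support, coeff d p * (coeff d q * fischerWeight d) := rfl

lemma fischer_comm (p q : MvPolynomial σ ℝ) : fischer p q = fischer q p := by
  classical
  rw [fischer_apply, fischer_apply, sum_support_eq_of_subset Finset.subset_union_left,
    sum_support_eq_of_subset (Finset.subset_union_right (s₁ := p.support))]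
  exact Finset.sum_congr rfl fun d _ => by ring

lemma fischer_monomial_right (p : MvPolynomial σ ℝ) (d : σ →₀ ℕ) (c : ℝ) :
    fischer p (monomial d c) = coeff d p * c * fischerWeight d := by
  classical
  rw [fischer_apply, sum_support_eq_of_subset (Finset.subset_union_left (s₂ := {d}))]
  simp [coeff_monomial, mul_assoc]

lemma fischer_self_pos {p : MvPolynomial σ ℝ} (hp : p ≠ 0) : 0 < fischer p p := by
  obtain ⟨d, hd⟩ := support_nonempty.mpr hp
  refine Finset.sum_pos' (fun d _ => ?_) ⟨d, hd, ?_⟩ <;> rw [← mul_assoc]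
  · exact mul_nonneg (mul_self_nonneg _) (fischerWeight_pos d).le
  · exact mul_pos (mul_self_pos.mpr (mem_support_iff.mp hd)) (fischerWeight_pos d)

lemma fischer_X_mul_right (i : σ) (p q : MvPolynomial σ ℝ) :
    fischer p (X i * q) = fischer (pderiv i p) q := by
  induction q using MvPolynomial.induction_on' with
  | add q q' hq hq' => rw [mul_add, map_add, map_add, hq, hq']
  | monomial d c =>
    rw [← pow_one (X i), mul_comm, ← monomial_add_single, fischer_monomial_right,
      fischer_monomial_right, coeff_pderiv, fischerWeight_add_single]
    ring

lemma isAdjointPair_pderiv_mulLeft_X (i : σ) :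
    LinearMap.IsAdjointPair fischer fischer (pderiv i : Derivation ℝ (MvPolynomial σ ℝ) _)
      (LinearMap.mulLeft ℝ (X i : MvPolynomial σ ℝ)) :=
  fun p q => (fischer_X_mul_right i p q).symm

lemma isAdjointPair_mulLeft_X_pderiv (i : σ) :
    LinearMap.IsAdjointPair fischer fischer (LinearMap.mulLeft ℝ (X i : MvPolynomial σ ℝ))
      (pderiv i : Derivation ℝ (MvPolynomial σ ℝ) _) := fun p q => by
  rw [fischer_comm, LinearMap.mulLeft_apply, fischer_X_mul_right, fischer_comm]

lemma eq_zero_of_isAdjointPair_fischer {f g : MvPolynomial σ ℝ → MvPolynomial σ ℝ}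
    (h : LinearMap.IsAdjointPair fischer fischer f g) {q : MvPolynomial σ ℝ} (hq : f (g q) = 0) :
    g q = 0 := by
  by_contra hne
  have hpos := fischer_self_pos hne
  rw [← h, hq, map_zero, LinearMap.zero_apply] at hpos
  exact hpos.false

end Fischer

section WeightedDegree

variable {R : Type*} [CommRing R]

def ShiftsWeightedDegree (w : σ → ℤ) (f : MvPolynomial σ R →ₗ[R] MvPolynomial σ R) (s : ℤ) :
    Prop :=
  ∀ m, ∀ p ∈ weightedHomogeneousSubmodule R w m, f p ∈ weightedHomogeneousSubmodule R w (m + s)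

variable {w : σ → ℤ}

lemma shiftsWeightedDegree_pderiv (i : σ) :
    ShiftsWeightedDegree w (pderiv i : Derivation R (MvPolynomial σ R) _).toLinearMap (-w i) := by
  intro m p hp d hd
  change coeff d (pderiv i p) ≠ 0 at hd
  rw [coeff_pderiv] at hd
  have h := hp (left_ne_zero_of_mul hd)
  rw [map_add, Finsupp.weight_single, one_smul] at h
  rw [← h]
  ring

lemma shiftsWeightedDegree_mulLeft_X (i : σ) :
    ShiftsWeightedDegree w (LinearMap.mulLeft R (X i : MvPolynomial σ R)) (w i) :=
  fun m _ hp => by rw [add_comm]; exact (isWeightedHomogeneous_X R w i).mul hp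

namespace ShiftsWeightedDegree

variable {f g : MvPolynomial σ R →ₗ[R] MvPolynomial σ R} {s s' : ℤ}

lemma comp (hf : ShiftsWeightedDegree w f s) (hg : ShiftsWeightedDegree w g s') :
    ShiftsWeightedDegree w (g ∘ₗ f) (s + s') :=
  fun m p hp => by rw [← add_assoc]; exact hg _ _ (hf m p hp)

lemma add (hf : ShiftsWeightedDegree w f s) (hg : ShiftsWeightedDegree w g s) :
    ShiftsWeightedDegree w (f + g) s :=
  fun m p hp => Submodule.add_mem _ (hf m p hp) (hg m p hp)

lemma smul (c : R) (hf : ShiftsWeightedDegree w f s) : ShiftsWeightedDegree w (c • f) s :=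
  fun m p hp => Submodule.smul_mem _ c (hf m p hp)

lemma sum {ι : Type*} (t : Finset ι) {f : ι → MvPolynomial σ R →ₗ[R] MvPolynomial σ R}
    (hf : ∀ i ∈ t, ShiftsWeightedDegree w (f i) s) : ShiftsWeightedDegree w (∑ i ∈ t, f i) s :=
  fun m p hp => by
    rw [LinearMap.sum_apply]
    exact Submodule.sum_mem _ fun i hi => hf i hi m p hp

end ShiftsWeightedDegree

lemma finrank_weightedHomogeneousSubmodule {K : Type*} [Field K] {m : ℤ}
    (hfin : {d : σ →₀ ℕ | Finsupp.weight w d = m}.Finite) :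
    FiniteDimensional K (weightedHomogeneousSubmodule K w m) ∧
      Module.finrank K (weightedHomogeneousSubmodule K w m) =
        {d : σ →₀ ℕ | Finsupp.weight w d = m}.ncard := by
  have := hfin.to_subtype
  rw [weightedHomogeneousSubmodule_eq_finsupp_supported]
  exact ⟨Module.Finite.of_basis (basisRestrictSupport K _),
    (Module.finrank_eq_nat_card_basis (basisRestrictSupport K _)).trans (Nat.card_coe_set_eq _)⟩

end WeightedDegree

lemma X_dvd_of_aeval_update_X_zero {R : Type*} [CommRing R] [DecidableEq σ] {i : σ}
    {q : MvPolynomial σ R} (h : aeval (Function.update X i (0 : MvPolynomial σ R)) q = 0) :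
    X i ∣ q := by
  let π := Ideal.Quotient.mkₐ R (Ideal.span {(X i : MvPolynomial σ R)})
  have hπ : π.comp (aeval (Function.update X i 0)) = π := algHom_ext fun j => by
    rcases eq_or_ne j i with rfl | hj
    · simp [π]
    · simp [hj]
  rw [← Ideal.mem_span_singleton, ← Ideal.Quotient.eq_zero_iff_mem, ← Ideal.Quotient.mkₐ_eq_mk R]
  change π q = 0
  rw [← hπ, AlgHom.comp_apply, h, map_zero]

section HorizontalField

variable {R : Type*} [CommRing R] (t a b : σ) (c : R)

def horizontalField : MvPolynomial σ R →ₗ[R] MvPolynomial σ R :=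
  (pderiv a).toLinearMap + c • (LinearMap.mulLeft R (X b) ∘ₗ (pderiv t).toLinearMap)

def horizontalFieldAdj : MvPolynomial σ R →ₗ[R] MvPolynomial σ R :=
  LinearMap.mulLeft R (X a) + c • (LinearMap.mulLeft R (X t) ∘ₗ (pderiv b).toLinearMap)

variable {t a b}

lemma isAdjointPair_horizontalField [Fintype σ] (c : ℝ) :
    LinearMap.IsAdjointPair fischer fischer (horizontalField t a b c)
      (horizontalFieldAdj t a b c) :=
  (isAdjointPair_pderiv_mulLeft_X a).add
    (((isAdjointPair_pderiv_mulLeft_X t).comp (isAdjointPair_mulLeft_X_pderiv b)).smul c)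

lemma shiftsWeightedDegree_horizontalField {w : σ → ℤ} (h : w t = w a + w b) :
    ShiftsWeightedDegree w (horizontalField t a b c) (-w a) := by
  have hv := (shiftsWeightedDegree_pderiv (R := R) (w := w) t).comp
    (shiftsWeightedDegree_mulLeft_X b)
  rw [h, show -(w a + w b) + w b = -w a by ring] at hv
  exact (shiftsWeightedDegree_pderiv a).add (hv.smul c)

lemma shiftsWeightedDegree_horizontalFieldAdj {w : σ → ℤ} (h : w t = w a + w b) :
    ShiftsWeightedDegree w (horizontalFieldAdj t a b c) (w a) := by
  have hv := (shiftsWeightedDegree_pderiv (R := R) (w := w) b).comp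
    (shiftsWeightedDegree_mulLeft_X t)
  rw [h, show -w b + (w a + w b) = w a by ring] at hv
  exact (shiftsWeightedDegree_mulLeft_X a).add (hv.smul c)

lemma horizontalFieldAdj_X_mul (hb : b ≠ t) (q : MvPolynomial σ R) :
    horizontalFieldAdj t a b c (X t * q) = X t * horizontalFieldAdj t a b c q := by
  simp only [horizontalFieldAdj, LinearMap.add_apply, LinearMap.smul_apply, LinearMap.comp_apply,
    LinearMap.mulLeft_apply, Derivation.coeFn_coe, pderiv_mul, pderiv_X_of_ne hb.symm, zero_mul,
    zero_add, smul_eq_C_mul]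
  ring

lemma aeval_update_horizontalFieldAdj [DecidableEq σ] (ha : a ≠ t) (q : MvPolynomial σ R) :
    aeval (Function.update X t (0 : MvPolynomial σ R)) (horizontalFieldAdj t a b c q) =
      X a * aeval (Function.update X t (0 : MvPolynomial σ R)) q := by
  simp [horizontalFieldAdj, ha]

end HorizontalField

end MvPolynomial

section Heisenberg

variable {k : ℕ}

lemma xI_ne_tI (j : Fin k) : xI k j ≠ tI k := by
  simp only [xI, tI, ne_eq, Fin.ext_iff]; omega

lemma yI_ne_tI (j : Fin k) : yI k j ≠ tI k := by
  simp only [yI, tI, ne_eq, Fin.ext_iff]; omega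

lemma wk_of_ne_tI {i : Fin (2 * k + 1)} (h : i ≠ tI k) : wk k i = 1 :=
  if_neg fun h' => h (Fin.ext h')

lemma wk_tI : wk k (tI k) = 2 := if_pos rfl

lemma one_le_wk (i : Fin (2 * k + 1)) : 1 ≤ wk k i := by
  unfold wk; split_ifs <;> norm_num

lemma XopK_eq (j : Fin k) : XopK k j = horizontalField (tI k) (xI k j) (yI k j) 2 :=
  LinearMap.ext fun p => by simp [XopK, horizontalField, smul_eq_C_mul, map_ofNat]

lemma YopK_eq (j : Fin k) : YopK k j = horizontalField (tI k) (yI k j) (xI k j) (-2) :=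
  LinearMap.ext fun p => by simp [YopK, horizontalField, smul_eq_C_mul, map_ofNat, sub_eq_add_neg]

variable (k) in
def XopKAdj (j : Fin k) : Rk k →ₗ[ℝ] Rk k := horizontalFieldAdj (tI k) (xI k j) (yI k j) 2

variable (k) in
def YopKAdj (j : Fin k) : Rk k →ₗ[ℝ] Rk k := horizontalFieldAdj (tI k) (yI k j) (xI k j) (-2)

variable (k) in
def ΔHkAdj : Rk k →ₗ[ℝ] Rk k :=
  ∑ j : Fin k, (XopKAdj k j ∘ₗ XopKAdj k j + YopKAdj k j ∘ₗ YopKAdj k j)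

lemma isAdjointPair_ΔHk : LinearMap.IsAdjointPair fischer fischer (ΔHk k) (ΔHkAdj k) := by
  refine LinearMap.isAdjointPair_sum _ fun j _ => ?_
  have hX : LinearMap.IsAdjointPair fischer fischer (XopK k j) (XopKAdj k j) := by
    rw [XopK_eq]; exact isAdjointPair_horizontalField _
  have hY : LinearMap.IsAdjointPair fischer fischer (YopK k j) (YopKAdj k j) := by
    rw [YopK_eq]; exact isAdjointPair_horizontalField _
  exact (hX.comp hX).add (hY.comp hY)

lemma shiftsWeightedDegree_horizontalField_wk {a b : Fin (2 * k + 1)} (ha : a ≠ tI k)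
    (hb : b ≠ tI k) (c : ℝ) :
    ShiftsWeightedDegree (wk k) (horizontalField (tI k) a b c) (-1) ∧
      ShiftsWeightedDegree (wk k) (horizontalFieldAdj (tI k) a b c) 1 := by
  have h : wk k (tI k) = wk k a + wk k b := by rw [wk_tI, wk_of_ne_tI ha, wk_of_ne_tI hb]; rfl
  have hv := shiftsWeightedDegree_horizontalField c h
  have hv' := shiftsWeightedDegree_horizontalFieldAdj c h
  rw [wk_of_ne_tI ha] at hv hv'
  exact ⟨hv, hv'⟩

lemma shiftsWeightedDegree_ΔHk : ShiftsWeightedDegree (wk k) (ΔHk k) (-2) := by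
  refine ShiftsWeightedDegree.sum _ fun j _ => ?_
  have hX := (shiftsWeightedDegree_horizontalField_wk (xI_ne_tI j) (yI_ne_tI j) 2).1
  have hY := (shiftsWeightedDegree_horizontalField_wk (yI_ne_tI j) (xI_ne_tI j) (-2)).1
  rw [XopK_eq, YopK_eq]
  exact (hX.comp hX).add (hY.comp hY)

lemma shiftsWeightedDegree_ΔHkAdj : ShiftsWeightedDegree (wk k) (ΔHkAdj k) 2 := by
  refine ShiftsWeightedDegree.sum _ fun j _ => ?_
  have hX := (shiftsWeightedDegree_horizontalField_wk (xI_ne_tI j) (yI_ne_tI j) 2).2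
  have hY := (shiftsWeightedDegree_horizontalField_wk (yI_ne_tI j) (xI_ne_tI j) (-2)).2
  exact (hX.comp hX).add (hY.comp hY)

lemma ΔHkAdj_X_tI_mul (q : Rk k) : ΔHkAdj k (X (tI k) * q) = X (tI k) * ΔHkAdj k q := by
  simp [ΔHkAdj, XopKAdj, YopKAdj, horizontalFieldAdj_X_mul, xI_ne_tI, yI_ne_tI, Finset.mul_sum,
    mul_add]

lemma aeval_update_ΔHkAdj (q : Rk k) :
    aeval (Function.update X (tI k) (0 : Rk k)) (ΔHkAdj k q) =
      (∑ j : Fin k, (X (xI k j) ^ 2 + X (yI k j) ^ 2)) *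
        aeval (Function.update X (tI k) (0 : Rk k)) q := by
  simp only [ΔHkAdj, XopKAdj, YopKAdj, LinearMap.sum_apply, LinearMap.add_apply,
    LinearMap.comp_apply, map_sum, map_add, aeval_update_horizontalFieldAdj, xI_ne_tI, yI_ne_tI,
    ne_eq, not_false_eq_true, Finset.sum_mul]
  exact Finset.sum_congr rfl fun j _ => by ring

lemma ΔHkAdj_injective (hk : 1 ≤ k) : Function.Injective (ΔHkAdj k) := by
  have hρ : (∑ j : Fin k, (X (xI k j) ^ 2 + X (yI k j) ^ 2) : Rk k) ≠ 0 := fun h => by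
    have h1 := congrArg (eval fun _ => (1 : ℝ)) h
    simp only [map_sum, map_add, map_pow, eval_X, one_pow, Finset.sum_const, Finset.card_univ,
      Fintype.card_fin, map_zero] at h1
    norm_num at h1
    omega
  rw [← LinearMap.ker_eq_bot, LinearMap.ker_eq_bot']
  intro q hq
  induction hn : degreeOf (tI k) q using Nat.strong_induction_on generalizing q with
  | _ n ih =>
  have hq0 : aeval (Function.update X (tI k) (0 : Rk k)) q = 0 := by
    have h := congrArg (aeval (Function.update X (tI k) (0 : Rk k))) hq
    rw [aeval_update_ΔHkAdj, map_zero] at h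
    exact (mul_eq_zero.mp h).resolve_left hρ
  obtain ⟨q', rfl⟩ := X_dvd_of_aeval_update_X_zero hq0
  rcases eq_or_ne q' 0 with rfl | hq'
  · exact mul_zero _
  have hS : ΔHkAdj k q' = 0 := by
    rw [ΔHkAdj_X_tI_mul] at hq
    exact (mul_eq_zero.mp hq).resolve_left (X_ne_zero _)
  have hdeg := (degreeOf_mul_X_eq_degreeOf_add_one_iff (tI k) q').mpr hq'
  rw [mul_comm (X (tI k)) q'] at hn
  rw [ih _ (by omega) q' hS rfl, mul_zero]

lemma finite_setOf_weight_wk (m : ℤ) :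
    {d : Fin (2 * k + 1) →₀ ℕ | Finsupp.weight (wk k) d = m}.Finite :=
  Finsupp.finite_setOf_weight_eq one_le_wk m

instance (m : ℤ) : FiniteDimensional ℝ (PmK k m) :=
  (finrank_weightedHomogeneousSubmodule (finite_setOf_weight_wk m)).1

lemma finrank_PmK (m : ℤ) :
    Module.finrank ℝ (PmK k m) = {d : Fin (2 * k + 1) →₀ ℕ | Finsupp.weight (wk k) d = m}.ncard :=
  (finrank_weightedHomogeneousSubmodule (finite_setOf_weight_wk m)).2

lemma ncard_setOf_weight_wk_and_tI_eq_zero (m : ℕ) :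
    {d : Fin (2 * k + 1) →₀ ℕ | Finsupp.weight (wk k) d = m ∧ d (tI k) = 0}.ncard =
      (2 * k).multichoose m := by
  have h : {d : Fin (2 * k + 1) →₀ ℕ | Finsupp.weight (wk k) d = m ∧ d (tI k) = 0} =
      ↑((Finset.univ.erase (tI k)).finsuppAntidiag m) := by
    ext d
    have hsupp : d.support ⊆ Finset.univ.erase (tI k) ↔ d (tI k) = 0 := by
      simp [Finset.subset_iff, not_imp_comm]
    have hweight (ht : d (tI k) = 0) :
        Finsupp.weight (wk k) d = ↑(∑ i ∈ Finset.univ.erase (tI k), d i) := by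
      rw [Finsupp.weight_eq_sum, ← Finset.add_sum_erase _ _ (Finset.mem_univ (tI k)), ht,
        zero_smul, zero_add, Nat.cast_sum]
      exact Finset.sum_congr rfl fun i hi => by
        rw [wk_of_ne_tI (Finset.ne_of_mem_erase hi), nsmul_one]
    simp only [Set.mem_ofPred_eq, Finset.mem_coe, Finset.mem_finsuppAntidiag, hsupp]
    constructor
    · rintro ⟨hw, ht⟩
      rw [hweight ht] at hw
      exact ⟨by exact_mod_cast hw, ht⟩
    · rintro ⟨hs, ht⟩
      exact ⟨by rw [hweight ht, hs], ht⟩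
  rw [h, Set.ncard_coe_finset, Finset.card_finsuppAntidiag_nat_eq_multichoose,
    Finset.card_erase_of_mem (Finset.mem_univ _), Finset.card_univ, Fintype.card_fin,
    Nat.add_sub_cancel]

lemma finrank_PmK_eq_add (m : ℕ) :
    Module.finrank ℝ (PmK k m) = Module.finrank ℝ (PmK k (m - 2)) + (2 * k).multichoose m := by
  rw [finrank_PmK, finrank_PmK, Finsupp.ncard_setOf_weight_eq (tI k) (finite_setOf_weight_wk _),
    wk_tI, ncard_setOf_weight_wk_and_tI_eq_zero]

lemma finrank_HmK_add_finrank_PmK (hk : 1 ≤ k) (m : ℤ) :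
    Module.finrank ℝ (HmK k m) + Module.finrank ℝ (PmK k (m - 2)) =
      Module.finrank ℝ (PmK k m) := by
  let L : PmK k m →ₗ[ℝ] PmK k (m - 2) :=
    (ΔHk k).restrict fun p hp => by
      have h := shiftsWeightedDegree_ΔHk m p hp
      rwa [← sub_eq_add_neg] at h
  let G : PmK k (m - 2) →ₗ[ℝ] PmK k m :=
    (ΔHkAdj k).restrict fun p hp => by
      have h := shiftsWeightedDegree_ΔHkAdj (m - 2) p hp
      rwa [sub_add_cancel] at h
  have hLG : Function.Injective (L ∘ₗ G) := by
    rw [← LinearMap.ker_eq_bot, LinearMap.ker_eq_bot']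
    intro q hq
    have hΔ : ΔHk k (ΔHkAdj k q) = 0 := congrArg Subtype.val hq
    exact Subtype.ext ((map_eq_zero_iff _ (ΔHkAdj_injective hk)).mp
      (eq_zero_of_isAdjointPair_fischer isAdjointPair_ΔHk hΔ))
  have hL : Function.Surjective L := .of_comp (LinearMap.injective_iff_surjective.mp hLG)
  have hker : LinearMap.ker L ≃ₗ[ℝ] HmK k m := by
    refine (LinearEquiv.ofEq _ _ ((LinearMap.ker_restrict _).trans ?_)).trans
      (Submodule.comapSubtypeEquivOfLe inf_le_left)
    rw [HmK, Submodule.comap_inf, Submodule.comap_subtype_self, top_inf_eq]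
  rw [← hker.finrank_eq, ← LinearMap.finrank_range_add_finrank_ker L,
    LinearMap.range_eq_top.mpr hL, finrank_top, add_comm]

end Heisenberg

/-- `dim H_m(ℍ_k) = C(m + 2k − 1, 2k − 1)`. -/
theorem stmt3 (k : ℕ) (hk : 1 ≤ k) (m : ℕ) :
    FiniteDimensional ℝ (HmK k (m : ℤ)) ∧
    Module.finrank ℝ (HmK k (m : ℤ)) = Nat.choose (m + 2 * k - 1) (2 * k - 1) := by
  refine ⟨Submodule.finiteDimensional_of_le (inf_le_left : HmK k m ≤ PmK k m), ?_⟩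
  have hdim := finrank_HmK_add_finrank_PmK hk m
  rw [finrank_PmK_eq_add, Nat.multichoose_eq, show 2 * k + m - 1 = m + 2 * k - 1 by omega] at hdim
  rw [Nat.choose_symm_of_eq_add (show m + 2 * k - 1 = (2 * k - 1) + m by omega)]
  omega

end
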